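/- Let X, Z_1, …, Z_K, Γ, U be real N×T matrices with rank(Γ) ≤ R, let β, β̂ ∈ ℝ and δ, δ̂ ∈ ℝ^K, and set Y = Xβ + Σ_{k=1}^K Z_k δ_k + Γ + U. Suppose Γ̂ minimizes ‖Y − Xβ̂ − Σ_{k=1}^K Z_k δ̂_k − G‖_F² over all real N×T matrices G with rank(G) ≤ R. Then ‖Γ̂ − Γ‖_* ≤ 4R · ( s_1(U) + s_1(X)·|β̂ − β| + Σ_{k=1}^K s_1(Z_k)·|δ̂_k − δ_k| ). -/

import Mathlib

open scoped BigOperators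

noncomputable section

/-- Frobenius inner product of two real `N × T` matrices. -/
def finner {N T : ℕ} (A B : Matrix (Fin N) (Fin T) ℝ) : ℝ :=
  ∑ i, ∑ t, A i t * B i t

/-- Frobenius norm of a real `N × T` matrix. -/
def fnorm {N T : ℕ} (A : Matrix (Fin N) (Fin T) ℝ) : ℝ :=
  Real.sqrt (finner A A)

/-- The `j`-th singular value (0-indexed, in decreasing order) of a real `N × T` matrix:
the square root of the `j`-th largest eigenvalue of `A * Aᵀ`; `0` for `j ≥ N`. -/
def sval {N T : ℕ} (A : Matrix (Fin N) (Fin T) ℝ) (j : ℕ) : ℝ :=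
  if h : j < N then
    Real.sqrt
      ((Matrix.isHermitian_mul_conjTranspose_self A).eigenvalues
        (Tuple.sort ((Matrix.isHermitian_mul_conjTranspose_self A).eigenvalues)
          ((⟨j, h⟩ : Fin N).rev)))
  else 0

/-- Spectral norm: the largest singular value. -/
def s1 {N T : ℕ} (A : Matrix (Fin N) (Fin T) ℝ) : ℝ := sval A 0

/-- Nuclear norm: the sum of the singular values. -/
def nucNorm {N T : ℕ} (A : Matrix (Fin N) (Fin T) ℝ) : ℝ :=
  ∑ j ∈ Finset.range N, sval A j

/-!
Write `D = Γ̂ - Γ` and `E = U + (β - β̂) X + ∑ (δₖ - δ̂ₖ) Zₖ`, so that the residual of a candidate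
`G` is `E - (G - Γ)`. Comparing `Γ̂` with the admissible competitor `Γ` gives the basic inequality
`‖D‖_F² ≤ 2 ⟨D, E⟩`. Expanding `⟨D, E⟩` in an eigenbasis of `D Dᵀ` bounds it by `‖D‖_* s₁(E)`, and
Cauchy–Schwarz over the at most `rank D ≤ 2R` nonzero singular values gives `‖D‖_*² ≤ 2R ‖D‖_F²`.
Hence `‖D‖_*² ≤ 4R s₁(E) ‖D‖_*`. Finally `s₁` is the `ℓ²` operator norm, so `s₁(E)` is bounded by
the triangle inequality.
-/

open Matrix

lemma pi_norm_eq_of_isGreatest {ι : Type*} [Fintype ι] {v : ι → ℝ} (hv : 0 ≤ v) {a : ℝ}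
    (h : IsGreatest (Set.range v) a) : ‖v‖ = a := by
  obtain ⟨⟨i, rfl⟩, hmax⟩ := h
  refine le_antisymm ((pi_norm_le_iff_of_nonneg (hv i)).2 fun j => ?_) ?_
  · rw [Real.norm_of_nonneg (hv j)]; exact hmax ⟨j, rfl⟩
  · simpa [Real.norm_of_nonneg (hv i)] using norm_le_pi_norm v i

theorem Matrix.rank_sub_le {m n K : Type*} [Fintype n] [Field K] (A B : Matrix m n K) :
    (A - B).rank ≤ A.rank + B.rank := by
  have hle : LinearMap.range (A - B).mulVecLin ≤
      LinearMap.range A.mulVecLin ⊔ LinearMap.range B.mulVecLin := by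
    rintro _ ⟨x, rfl⟩
    rw [mulVecLin_apply, sub_mulVec]
    exact Submodule.sub_mem _ (Submodule.mem_sup_left ⟨x, rfl⟩) (Submodule.mem_sup_right ⟨x, rfl⟩)
  exact (Submodule.finrank_mono hle).trans (Submodule.finrank_add_le_finrank_add_finrank _ _)

section GramSpectrum

variable {N T : ℕ}

def gramEigenvalues (A : Matrix (Fin N) (Fin T) ℝ) : Fin N → ℝ :=
  (isHermitian_mul_conjTranspose_self A).eigenvalues

def gramEigenbasis (A : Matrix (Fin N) (Fin T) ℝ) :
    OrthonormalBasis (Fin N) ℝ (EuclideanSpace ℝ (Fin N)) :=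
  (isHermitian_mul_conjTranspose_self A).eigenvectorBasis

lemma gramEigenvalues_nonneg (A : Matrix (Fin N) (Fin T) ℝ) (i : Fin N) :
    0 ≤ gramEigenvalues A i :=
  eigenvalues_self_mul_conjTranspose_nonneg A i

lemma sval_nonneg (A : Matrix (Fin N) (Fin T) ℝ) (j : ℕ) : 0 ≤ sval A j := by
  unfold sval; split <;> positivity

lemma s1_nonneg (A : Matrix (Fin N) (Fin T) ℝ) : 0 ≤ s1 A := sval_nonneg A 0

lemma nucNorm_nonneg (A : Matrix (Fin N) (Fin T) ℝ) : 0 ≤ nucNorm A :=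
  Finset.sum_nonneg fun j _ => sval_nonneg A j

lemma nucNorm_eq_sum_sqrt_gramEigenvalues (A : Matrix (Fin N) (Fin T) ℝ) :
    nucNorm A = ∑ i, √(gramEigenvalues A i) := by
  rw [nucNorm, ← Fin.sum_univ_eq_sum_range]
  refine Eq.trans (Finset.sum_congr rfl fun i _ => ?_)
    (Equiv.sum_comp (Fin.revPerm.trans (Tuple.sort (gramEigenvalues A))) _)
  rw [sval, dif_pos i.isLt]
  rfl

lemma isGreatest_range_gramEigenvalues_sq_s1 (A : Matrix (Fin N) (Fin T) ℝ) (hN : 0 < N) :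
    IsGreatest (Set.range (gramEigenvalues A)) (s1 A ^ 2) := by
  set σ := Tuple.sort (gramEigenvalues A)
  have hs1 : s1 A ^ 2 = gramEigenvalues A (σ (⟨0, hN⟩ : Fin N).rev) := by
    rw [s1, sval, dif_pos hN]
    exact Real.sq_sqrt (gramEigenvalues_nonneg A _)
  refine ⟨hs1 ▸ Set.mem_range_self _, ?_⟩
  rintro _ ⟨i, rfl⟩
  rw [hs1, ← σ.apply_symm_apply i]
  exact Tuple.monotone_sort _ (Fin.le_def.2 (by simp; omega))

lemma norm_toLp_conjTranspose_mulVec_gramEigenbasis (A : Matrix (Fin N) (Fin T) ℝ) (i : Fin N) :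
    ‖WithLp.toLp 2 (Aᴴ *ᵥ gramEigenbasis A i)‖ = √(gramEigenvalues A i) := by
  have hA := isHermitian_mul_conjTranspose_self A
  rw [← Real.sqrt_sq (norm_nonneg _), ← real_inner_self_eq_norm_sq, gramEigenvalues,
    hA.eigenvalues_eq]
  congr 1
  simp only [EuclideanSpace.inner_toLp_toLp, star_trivial, RCLike.re_to_real]
  rw [← mulVec_mulVec, dotProduct_mulVec, vecMul_conjTranspose, star_trivial, dotProduct_comm]
  rfl

end GramSpectrum

section L2OpNorm

open scoped Matrix.Norms.L2Operator

variable {N T : ℕ}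

lemma s1_eq_l2_opNorm (A : Matrix (Fin N) (Fin T) ℝ) : s1 A = ‖A‖ := by
  rcases Nat.eq_zero_or_pos N with rfl | hN
  · simp [s1, sval, Subsingleton.elim A 0]
  have hA := isHermitian_mul_conjTranspose_self A
  -- C*-identity, then unitary invariance: `‖A‖² = ‖A Aᴴ‖ = ‖diagonal (eigenvalues of A Aᴴ)‖`.
  have h : ‖A‖ ^ 2 = ‖gramEigenvalues A‖ := by
    rw [sq, ← l2_opNorm_conjTranspose A, ← l2_opNorm_conjTranspose_mul_self,
      conjTranspose_conjTranspose, hA.spectral_theorem, Unitary.conjStarAlgAut_apply,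
      ← Unitary.coe_star, CStarRing.norm_mul_coe_unitary, CStarRing.norm_coe_unitary_mul,
      l2_opNorm_diagonal]
    rfl
  rw [pi_norm_eq_of_isGreatest (gramEigenvalues_nonneg A)
    (isGreatest_range_gramEigenvalues_sq_s1 A hN)] at h
  exact (pow_left_inj₀ (s1_nonneg A) (norm_nonneg A) two_ne_zero).1 h.symm

lemma norm_toLp_conjTranspose_mulVec_le_s1_mul (A : Matrix (Fin N) (Fin T) ℝ)
    (x : EuclideanSpace ℝ (Fin N)) : ‖WithLp.toLp 2 (Aᴴ *ᵥ x)‖ ≤ s1 A * ‖x‖ := by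
  rw [s1_eq_l2_opNorm, ← l2_opNorm_conjTranspose]
  exact l2_opNorm_mulVec Aᴴ x

lemma s1_add_smul_add_sum_smul_le {ι : Type*} [Fintype ι] (U X : Matrix (Fin N) (Fin T) ℝ)
    (Z : ι → Matrix (Fin N) (Fin T) ℝ) (a : ℝ) (c : ι → ℝ) :
    s1 (U + a • X + ∑ k, c k • Z k) ≤ s1 U + |a| * s1 X + ∑ k, |c k| * s1 (Z k) := by
  simp only [s1_eq_l2_opNorm]
  calc _ ≤ ‖U‖ + ‖a • X‖ + ‖∑ k, c k • Z k‖ := norm_add₃_le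
    _ ≤ ‖U‖ + ‖a • X‖ + ∑ k, ‖c k • Z k‖ := by gcongr; exact norm_sum_le _ _
    _ = _ := by simp only [norm_smul, Real.norm_eq_abs]

end L2OpNorm

section Frobenius

variable {N T : ℕ}

lemma finner_eq_sum_inner {ι : Type*} [Fintype ι]
    (b : OrthonormalBasis ι ℝ (EuclideanSpace ℝ (Fin N))) (D E : Matrix (Fin N) (Fin T) ℝ) :
    finner D E = ∑ j, inner ℝ (WithLp.toLp 2 (Dᴴ *ᵥ b j)) (WithLp.toLp 2 (Eᴴ *ᵥ b j)) := by
  have hcol : ∀ t, ∑ i, D i t * E i t = ∑ j, (Dᴴ *ᵥ b j) t * (Eᴴ *ᵥ b j) t := fun t => by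
    have := b.sum_inner_mul_inner (WithLp.toLp 2 fun i => D i t) (WithLp.toLp 2 fun i => E i t)
    simp only [PiLp.inner_apply, RCLike.inner_apply, conj_trivial] at this
    simpa only [mulVec, dotProduct, conjTranspose_apply, star_trivial, mul_comm] using this.symm
  simp only [finner, EuclideanSpace.inner_toLp_toLp, star_trivial, dotProduct]
  rw [Finset.sum_comm]
  simp only [hcol, mul_comm]
  exact Finset.sum_comm

lemma finner_self_eq_sum_gramEigenvalues (A : Matrix (Fin N) (Fin T) ℝ) :
    finner A A = ∑ i, gramEigenvalues A i := by
  rw [finner_eq_sum_inner (gramEigenbasis A)]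
  refine Finset.sum_congr rfl fun i _ => ?_
  rw [real_inner_self_eq_norm_sq, norm_toLp_conjTranspose_mulVec_gramEigenbasis,
    Real.sq_sqrt (gramEigenvalues_nonneg A i)]

lemma finner_le_nucNorm_mul_s1 (D E : Matrix (Fin N) (Fin T) ℝ) :
    finner D E ≤ nucNorm D * s1 E := by
  rw [finner_eq_sum_inner (gramEigenbasis D), nucNorm_eq_sum_sqrt_gramEigenvalues, Finset.sum_mul]
  gcongr with i
  calc _ ≤ ‖WithLp.toLp 2 (Dᴴ *ᵥ gramEigenbasis D i)‖ *
          ‖WithLp.toLp 2 (Eᴴ *ᵥ gramEigenbasis D i)‖ := real_inner_le_norm _ _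
    _ ≤ √(gramEigenvalues D i) * (s1 E * 1) := by
        rw [norm_toLp_conjTranspose_mulVec_gramEigenbasis, ← (gramEigenbasis D).orthonormal.1 i]
        gcongr
        exact norm_toLp_conjTranspose_mulVec_le_s1_mul E _
    _ = √(gramEigenvalues D i) * s1 E := by rw [mul_one]

lemma sq_nucNorm_le_rank_mul_finner_self (A : Matrix (Fin N) (Fin T) ℝ) :
    nucNorm A ^ 2 ≤ A.rank * finner A A := by
  have hA := isHermitian_mul_conjTranspose_self A
  set s := Finset.univ.filter fun i => gramEigenvalues A i ≠ 0
  have hcard : s.card = A.rank := by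
    rw [← rank_self_mul_conjTranspose, hA.rank_eq_card_non_zero_eigs, Fintype.card_subtype]
    rfl
  have hsupp : ∀ f : ℝ → ℝ, f 0 = 0 →
      ∑ i ∈ s, f (gramEigenvalues A i) = ∑ i, f (gramEigenvalues A i) :=
    fun f hf => Finset.sum_filter_of_ne fun i _ h hi => h (by rw [hi, hf])
  have hsum : ∑ i ∈ s, gramEigenvalues A i = ∑ i, gramEigenvalues A i := hsupp (fun x => x) rfl
  rw [nucNorm_eq_sum_sqrt_gramEigenvalues, finner_self_eq_sum_gramEigenvalues,
    ← hsupp _ Real.sqrt_zero, ← hsum, ← hcard]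
  calc _ ≤ (s.card : ℝ) * ∑ i ∈ s, √(gramEigenvalues A i) ^ 2 := sq_sum_le_card_mul_sum_sq
    _ = _ := by
      congr 1
      exact Finset.sum_congr rfl fun i _ => Real.sq_sqrt (gramEigenvalues_nonneg A i)

lemma sq_fnorm (A : Matrix (Fin N) (Fin T) ℝ) : fnorm A ^ 2 = finner A A :=
  Real.sq_sqrt (Finset.sum_nonneg fun _ _ => Finset.sum_nonneg fun _ _ => mul_self_nonneg _)

lemma finner_sub_sub_self (A B : Matrix (Fin N) (Fin T) ℝ) :
    finner (A - B) (A - B) = finner A A - 2 * finner B A + finner B B := by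
  simp only [finner, Matrix.sub_apply, Finset.mul_sum, ← Finset.sum_sub_distrib,
    ← Finset.sum_add_distrib]
  exact Finset.sum_congr rfl fun _ _ => Finset.sum_congr rfl fun _ _ => by ring

lemma finner_self_le_two_mul_finner_of_sq_fnorm_sub_le {D E : Matrix (Fin N) (Fin T) ℝ}
    (h : fnorm (E - D) ^ 2 ≤ fnorm E ^ 2) : finner D D ≤ 2 * finner D E := by
  rw [sq_fnorm, sq_fnorm, finner_sub_sub_self] at h
  linarith

lemma nucNorm_le_two_mul_rank_mul_s1_of_finner_self_le {D E : Matrix (Fin N) (Fin T) ℝ}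
    (h : finner D D ≤ 2 * finner D E) : nucNorm D ≤ 2 * D.rank * s1 E := by
  have hsq : nucNorm D ^ 2 ≤ 2 * D.rank * s1 E * nucNorm D :=
    calc nucNorm D ^ 2 ≤ D.rank * finner D D := sq_nucNorm_le_rank_mul_finner_self D
      _ ≤ D.rank * (2 * (nucNorm D * s1 E)) := by
        gcongr
        linarith [finner_le_nucNorm_mul_s1 D E]
      _ = 2 * D.rank * s1 E * nucNorm D := by ring
  have hc : 0 ≤ 2 * (D.rank : ℝ) * s1 E := mul_nonneg (by positivity) (s1_nonneg E)
  nlinarith [nucNorm_nonneg D]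

end Frobenius

/-- Nuclear-norm bound on the error of the rank-constrained least-squares estimate of the
interactive fixed effects, given plug-in regression coefficients `β̂, δ̂`. -/
theorem nuclear_norm_bound_plugin_factor_estimate {N T K : ℕ} (R : ℕ)
    (X : Matrix (Fin N) (Fin T) ℝ) (Z : Fin K → Matrix (Fin N) (Fin T) ℝ)
    (Γ U Γhat Y : Matrix (Fin N) (Fin T) ℝ)
    (β βhat : ℝ) (δ δhat : Fin K → ℝ)
    (hΓ : Γ.rank ≤ R) (hΓhat : Γhat.rank ≤ R)
    (hY : Y = β • X + ∑ k, δ k • Z k + Γ + U)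
    (hmin : ∀ G : Matrix (Fin N) (Fin T) ℝ, G.rank ≤ R →
      (fnorm (Y - βhat • X - ∑ k, δhat k • Z k - Γhat)) ^ 2 ≤
      (fnorm (Y - βhat • X - ∑ k, δhat k • Z k - G)) ^ 2) :
    nucNorm (Γhat - Γ) ≤
      4 * (R : ℝ) * (s1 U + s1 X * |βhat - β| + ∑ k, s1 (Z k) * |δhat k - δ k|) := by
  set E := U + (β - βhat) • X + ∑ k, (δ k - δhat k) • Z k
  have hresid : ∀ G, Y - βhat • X - ∑ k, δhat k • Z k - G = E - (G - Γ) := fun G => by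
    simp only [hY, E, sub_smul, Finset.sum_sub_distrib]
    abel
  have hbasic : finner (Γhat - Γ) (Γhat - Γ) ≤ 2 * finner (Γhat - Γ) E := by
    apply finner_self_le_two_mul_finner_of_sq_fnorm_sub_le
    simpa only [hresid, sub_self, sub_zero] using hmin Γ hΓ
  have hrank : ((Γhat - Γ).rank : ℝ) ≤ 2 * R := by
    exact_mod_cast (rank_sub_le Γhat Γ).trans (by omega)
  calc nucNorm (Γhat - Γ) ≤ 2 * (Γhat - Γ).rank * s1 E :=
        nucNorm_le_two_mul_rank_mul_s1_of_finner_self_le hbasic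
    _ ≤ 2 * (2 * R) * (s1 U + |β - βhat| * s1 X + ∑ k, |δ k - δhat k| * s1 (Z k)) := by
      gcongr
      · exact s1_nonneg E
      · exact s1_add_smul_add_sum_smul_le U X Z (β - βhat) (δ - δhat)
    _ = _ := by simp only [abs_sub_comm β, abs_sub_comm (δ _), mul_comm |_|]; ring
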